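/- arXiv:math/0501371 — 2 statements merged into one kernel-verified Lean document; each statement's English description precedes it below -/
import Mathlib

section
/- Let A be a lattice with a least element 0 such that for every lattice L with a least element, the tensor product A⊗L is a lattice. Then A is locally finite, i.e., every finitely generated sublattice of A is finite. -/
/-! Tensor products of lattices with zero: bi-ideals, pure tensors,
compact bi-ideals, capped bi-ideals. -/

universe u v

section TensorDefs

variable {A : Type u} {B : Type v}

/-- The set `⊥_{A,B} = (A × {0}) ∪ ({0} × B)`. -/
def tensorBot (A : Type u) (B : Type v) [Lattice A] [OrderBot A]
    [Lattice B] [OrderBot B] : Set (A × B) :=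
  {p | p.1 = ⊥ ∨ p.2 = ⊥}

/-- A bi-ideal of `A × B`: a down-set containing `⊥_{A,B}` and closed under
lateral joins. -/
def IsBiIdeal [Lattice A] [OrderBot A] [Lattice B] [OrderBot B]
    (I : Set (A × B)) : Prop :=
  tensorBot A B ⊆ I ∧
  (∀ p ∈ I, ∀ q : A × B, q.1 ≤ p.1 → q.2 ≤ p.2 → q ∈ I) ∧
  (∀ a : A, ∀ b b' : B, (a, b) ∈ I → (a, b') ∈ I → (a, b ⊔ b') ∈ I) ∧
  (∀ a a' : A, ∀ b : B, (a, b) ∈ I → (a', b) ∈ I → (a ⊔ a', b) ∈ I)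

/-- The pure tensor `a ⊗ b = ⊥_{A,B} ∪ {(x,y) : x ≤ a ∧ y ≤ b}`. -/
def pureTensor [Lattice A] [OrderBot A] [Lattice B] [OrderBot B]
    (a : A) (b : B) : Set (A × B) :=
  tensorBot A B ∪ {p | p.1 ≤ a ∧ p.2 ≤ b}

/-- The smallest bi-ideal of `A × B` containing a given set, i.e. the join in the
lattice `A ⊗̄ B` of bi-ideals of the pure tensors contained in it. -/
def biIdealGen [Lattice A] [OrderBot A] [Lattice B] [OrderBot B]
    (S : Set (A × B)) : Set (A × B) :=
  ⋂₀ {I : Set (A × B) | IsBiIdeal I ∧ S ⊆ I}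

/-- The compact elements of `A ⊗̄ B` are exactly the bi-ideals that are finite
joins of pure tensors; these form the tensor product `A ⊗ B`. -/
def IsCompactBiIdeal [Lattice A] [OrderBot A] [Lattice B] [OrderBot B]
    (I : Set (A × B)) : Prop :=
  ∃ s : Finset (A × B), I = biIdealGen (⋃ p ∈ s, pureTensor p.1 p.2)

/-- `A ⊗ B` is a lattice iff the intersection of any two compact bi-ideals is
compact. -/
def TensorIsLattice (A : Type u) (B : Type v) [Lattice A] [OrderBot A]
    [Lattice B] [OrderBot B] : Prop :=
  ∀ I J : Set (A × B), IsCompactBiIdeal I → IsCompactBiIdeal J →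
    IsCompactBiIdeal (I ∩ J)

/-- A bi-ideal is capped if it is the down-set generated by `Γ ∪ ⊥_{A,B}` for some
finite `Γ ⊆ A × B`. -/
def IsCappedBiIdeal [Lattice A] [OrderBot A] [Lattice B] [OrderBot B]
    (I : Set (A × B)) : Prop :=
  ∃ Γ : Finset (A × B),
    I = tensorBot A B ∪ {q : A × B | ∃ p ∈ Γ, q.1 ≤ p.1 ∧ q.2 ≤ p.2}

/-- `A ⊗ B` is a capped tensor product if every element of `A ⊗ B` (i.e. every
compact bi-ideal of `A × B`) is capped. -/
def IsCappedTensorProduct (A : Type u) (B : Type v) [Lattice A] [OrderBot A]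
    [Lattice B] [OrderBot B] : Prop :=
  ∀ I : Set (A × B), IsCompactBiIdeal I → IsCappedBiIdeal I

end TensorDefs
/-- A lattice is locally finite if each of its finitely generated sublattices is
finite. -/
def IsLocallyFiniteLattice (A : Type u) [Lattice A] : Prop :=
  ∀ s : Finset A, (latticeClosure (s : Set A)).Finite


/-! Let `g₁, …, gₙ` generate a sublattice of `A`. Let `F` be the free lattice on `u, v₁, …, vₙ`,
`h : F → A` the homomorphism with `u ↦ 0` and `vₖ ↦ gₖ`, and `L = WithBot Fᵒᵈ`, in which `t̄`
denotes `t ∈ F` with the order reversed. The bi-ideal `I` generated by the `gₖ ⊗ v̄ₖ` consists,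
away from `⊥_{A,L}`, of the pairs below some `(h t, t̄)` with `t` in the sublattice `F₀`
generated by the `vₖ`. Put `J = e ⊗ ū` with `e = ⋁ gₖ`; by hypothesis `I ∩ J` is generated by
a finite `G`. For `t ∈ F₀` the pair `(h t, (t ∨ u)‾)` lies in `I ∩ J`, hence below an element of
the sublattice of `A × Lᵒᵈ` generated by `G`. Whitman's condition in `L`, together with the
incomparability of `u` with `F₀`, bounds the first coordinates of that sublattice by the join of
the `p.1`, `p ∈ G`, with `(t ∨ u)‾ ≤ p.2`, and this join is at most `h t`. So every element `h t`
of the sublattice generated by the `gₖ` is the join of a subset of `{p.1 | p ∈ G}`. -/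

open OrderDual

def WhitmanCondition (α : Type*) [Lattice α] : Prop :=
  ∀ a b c d : α, a ⊓ b ≤ c ⊔ d → a ≤ c ⊔ d ∨ b ≤ c ⊔ d ∨ a ⊓ b ≤ c ∨ a ⊓ b ≤ d

namespace WhitmanCondition

variable {α : Type*} [Lattice α]

theorem dual (h : WhitmanCondition α) : WhitmanCondition αᵒᵈ := by
  intro a b c d hle
  rcases h (ofDual c) (ofDual d) (ofDual a) (ofDual b) hle with h' | h' | h' | h'
  · exact Or.inr (Or.inr (Or.inl h'))
  · exact Or.inr (Or.inr (Or.inr h'))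
  · exact Or.inl h'
  · exact Or.inr (Or.inl h')

theorem withBot (h : WhitmanCondition α) : WhitmanCondition (WithBot α) := by
  intro a b c d hle
  induction a using WithBot.recBotCoe with
  | bot => exact Or.inl bot_le
  | coe a =>
  induction b using WithBot.recBotCoe with
  | bot => exact Or.inr (Or.inl bot_le)
  | coe b =>
  induction c using WithBot.recBotCoe with
  | bot => exact Or.inr (Or.inr (Or.inr (by simpa using hle)))
  | coe c =>
  induction d using WithBot.recBotCoe with
  | bot => exact Or.inr (Or.inr (Or.inl (by simpa using hle)))
  | coe d =>
  simp only [← WithBot.coe_inf, ← WithBot.coe_sup, WithBot.coe_le_coe] at hle ⊢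
  exact h a b c d hle

end WhitmanCondition

namespace FreeLattice

inductive Term (α : Type*) : Type _
  | var (a : α)
  | sup (s t : Term α)
  | inf (s t : Term α)

namespace Term

variable {α : Type*}

/-- Whitman's cut-free sequent calculus for the free lattice order. -/
inductive Le : Term α → Term α → Prop
  | var (a : α) : Le (var a) (var a)
  | sup_le {s t u} : Le s u → Le t u → Le (sup s t) u
  | le_inf {s t u} : Le s t → Le s u → Le s (inf t u)
  | inf_le_left {s t u} : Le s u → Le (inf s t) u
  | inf_le_right {s t u} : Le t u → Le (inf s t) u
  | le_sup_left {s t u} : Le s t → Le s (sup t u)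
  | le_sup_right {s t u} : Le s u → Le s (sup t u)

theorem Le.refl : ∀ s : Term α, Le s s
  | .var a => .var a
  | .sup s t => .sup_le (.le_sup_left (Le.refl s)) (.le_sup_right (Le.refl t))
  | .inf s t => .le_inf (.inf_le_left (Le.refl s)) (.inf_le_right (Le.refl t))

theorem Le.trans : ∀ {s t u : Term α}, Le s t → Le t u → Le s u
  | _, _, _, .var _, h => h
  | _, _, _, .sup_le h₁ h₂, h => .sup_le (h₁.trans h) (h₂.trans h)
  | _, _, _, .inf_le_left h₁, h => .inf_le_left (h₁.trans h)
  | _, _, _, .inf_le_right h₁, h => .inf_le_right (h₁.trans h)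
  | _, _, _, h, .le_inf h₁ h₂ => .le_inf (h.trans h₁) (h.trans h₂)
  | _, _, _, h, .le_sup_left h₁ => .le_sup_left (h.trans h₁)
  | _, _, _, h, .le_sup_right h₁ => .le_sup_right (h.trans h₁)
  | _, _, _, .le_inf h₁ _, .inf_le_left h => h₁.trans h
  | _, _, _, .le_inf _ h₂, .inf_le_right h => h₂.trans h
  | _, _, _, .le_sup_left h₁, .sup_le h _ => h₁.trans h
  | _, _, _, .le_sup_right h₂, .sup_le _ h => h₂.trans h
termination_by s t u => sizeOf s + sizeOf t + sizeOf u

end Term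

instance setoid (α : Type*) : Setoid (Term α) where
  r s t := s.Le t ∧ t.Le s
  iseqv := ⟨fun s => ⟨.refl s, .refl s⟩, fun h => ⟨h.2, h.1⟩,
    fun h₁ h₂ => ⟨h₁.1.trans h₂.1, h₂.2.trans h₁.2⟩⟩

end FreeLattice

def FreeLattice (α : Type*) : Type _ := Quotient (FreeLattice.setoid α)

namespace FreeLattice

open Term

variable {α : Type*}

instance : Lattice (FreeLattice α) where
  le := Quotient.lift₂ Term.Le fun _ _ _ _ h₁ h₂ =>
    propext ⟨fun h => (h₁.2.trans h).trans h₂.1, fun h => (h₁.1.trans h).trans h₂.2⟩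
  le_refl := by rintro ⟨s⟩; exact .refl s
  le_trans := by rintro ⟨s⟩ ⟨t⟩ ⟨u⟩; exact Le.trans
  le_antisymm := by rintro ⟨s⟩ ⟨t⟩ h₁ h₂; exact Quotient.sound ⟨h₁, h₂⟩
  sup := Quotient.map₂ Term.sup fun _ _ h₁ _ _ h₂ =>
    ⟨.sup_le (.le_sup_left h₁.1) (.le_sup_right h₂.1),
      .sup_le (.le_sup_left h₁.2) (.le_sup_right h₂.2)⟩
  le_sup_left := by rintro ⟨s⟩ ⟨t⟩; exact .le_sup_left (.refl s)
  le_sup_right := by rintro ⟨s⟩ ⟨t⟩; exact .le_sup_right (.refl t)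
  sup_le := by rintro ⟨s⟩ ⟨t⟩ ⟨u⟩; exact Le.sup_le
  inf := Quotient.map₂ Term.inf fun _ _ h₁ _ _ h₂ =>
    ⟨.le_inf (.inf_le_left h₁.1) (.inf_le_right h₂.1),
      .le_inf (.inf_le_left h₁.2) (.inf_le_right h₂.2)⟩
  inf_le_left := by rintro ⟨s⟩ ⟨t⟩; exact .inf_le_left (.refl s)
  inf_le_right := by rintro ⟨s⟩ ⟨t⟩; exact .inf_le_right (.refl t)
  le_inf := by rintro ⟨s⟩ ⟨t⟩ ⟨u⟩; exact Le.le_inf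

def of (a : α) : FreeLattice α := ⟦.var a⟧

theorem whitmanCondition : WhitmanCondition (FreeLattice α) := by
  rintro ⟨a⟩ ⟨b⟩ ⟨c⟩ ⟨d⟩ (h : Le (.inf a b) (.sup c d))
  cases h with
  | inf_le_left h => exact Or.inl h
  | inf_le_right h => exact Or.inr (Or.inl h)
  | le_sup_left h => exact Or.inr (Or.inr (Or.inl h))
  | le_sup_right h => exact Or.inr (Or.inr (Or.inr h))

section Lift

variable {β : Type*} [Lattice β] (f : α → β)

def Term.eval : Term α → β
  | .var a => f a
  | .sup s t => s.eval ⊔ t.eval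
  | .inf s t => s.eval ⊓ t.eval

theorem Term.eval_mono {s t : Term α} (h : s.Le t) : s.eval f ≤ t.eval f := by
  induction h with
  | var => exact le_rfl
  | sup_le _ _ h₁ h₂ => exact sup_le h₁ h₂
  | le_inf _ _ h₁ h₂ => exact le_inf h₁ h₂
  | inf_le_left _ h => exact inf_le_of_left_le h
  | inf_le_right _ h => exact inf_le_of_right_le h
  | le_sup_left _ h => exact le_sup_of_le_left h
  | le_sup_right _ h => exact le_sup_of_le_right h

def lift : LatticeHom (FreeLattice α) β where
  toFun := Quotient.lift (Term.eval f) fun _ _ h => (eval_mono f h.1).antisymm (eval_mono f h.2)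
  map_sup' := by rintro ⟨s⟩ ⟨t⟩; rfl
  map_inf' := by rintro ⟨s⟩ ⟨t⟩; rfl

@[simp] theorem lift_of (a : α) : lift f (of a) = f a := rfl

end Lift

end FreeLattice

theorem LatticeHom.eq_of_mem_latticeClosure {α β : Type*} [Lattice α] [Lattice β]
    (f : LatticeHom α β) {s : Set α} {c : β} (hs : ∀ x ∈ s, f x = c) {x : α}
    (hx : x ∈ latticeClosure s) : f x = c :=
  latticeClosure_min (t := f ⁻¹' {c}) hs (isSublattice_singleton.preimage f) hx

section Twisted

variable {A : Type u} {B : Type v} [Lattice A] [Lattice B]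

/-- Sublattices of `A × Bᵒᵈ`, seen inside `A × B`. -/
def IsTwistedSublattice (T : Set (A × B)) : Prop :=
  ∀ p ∈ T, ∀ q ∈ T, (p.1 ⊔ q.1, p.2 ⊓ q.2) ∈ T ∧ (p.1 ⊓ q.1, p.2 ⊔ q.2) ∈ T

def twistedClosure (S : Set (A × B)) : Set (A × B) :=
  ⋂₀ {T | IsTwistedSublattice T ∧ S ⊆ T}

theorem subset_twistedClosure (S : Set (A × B)) : S ⊆ twistedClosure S :=
  fun _ hp _ hT => hT.2 hp

theorem twistedClosure_min {S T : Set (A × B)} (hT : IsTwistedSublattice T) (hS : S ⊆ T) :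
    twistedClosure S ⊆ T :=
  Set.sInter_subset_of_mem ⟨hT, hS⟩

theorem isTwistedSublattice_twistedClosure (S : Set (A × B)) :
    IsTwistedSublattice (twistedClosure S) := fun p hp q hq =>
  ⟨fun T hT => (hT.1 p (hp T hT) q (hq T hT)).1, fun T hT => (hT.1 p (hp T hT) q (hq T hT)).2⟩

theorem twistedClosure_singleton (p : A × B) : twistedClosure {p} = {p} := by
  refine (twistedClosure_min ?_ le_rfl).antisymm (subset_twistedClosure _)
  rintro _ rfl _ rfl
  simp

theorem twistedClosure_image {M : Type*} [Lattice M] (f : LatticeHom M A) (φ : M → B)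
    (hφ_sup : ∀ s t, φ (s ⊔ t) = φ s ⊓ φ t) (hφ_inf : ∀ s t, φ (s ⊓ t) = φ s ⊔ φ t)
    (S : Set M) :
    twistedClosure ((fun t => (f t, φ t)) '' S) = (fun t => (f t, φ t)) '' latticeClosure S := by
  refine (twistedClosure_min ?_ (Set.image_mono subset_latticeClosure)).antisymm ?_
  · rintro _ ⟨s, hs, rfl⟩ _ ⟨t, ht, rfl⟩
    exact ⟨⟨s ⊔ t, isSublattice_latticeClosure.supClosed hs ht, by simp [hφ_sup]⟩,
      ⟨s ⊓ t, isSublattice_latticeClosure.infClosed hs ht, by simp [hφ_inf]⟩⟩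
  · rw [Set.image_subset_iff]
    refine latticeClosure_min (Set.image_subset_iff.1 (subset_twistedClosure _)) ⟨?_, ?_⟩
    · intro s hs t ht
      simpa [hφ_sup] using (isTwistedSublattice_twistedClosure _ _ hs _ ht).1
    · intro s hs t ht
      simpa [hφ_inf] using (isTwistedSublattice_twistedClosure _ _ hs _ ht).2

end Twisted

section BiIdeal

variable {A : Type u} {B : Type v} [Lattice A] [OrderBot A] [Lattice B] [OrderBot B]

theorem subset_biIdealGen (S : Set (A × B)) : S ⊆ biIdealGen S :=
  fun _ hp _ hI => hI.2 hp

theorem biIdealGen_subset {S I : Set (A × B)} (hI : IsBiIdeal I) (hS : S ⊆ I) :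
    biIdealGen S ⊆ I :=
  Set.sInter_subset_of_mem ⟨hI, hS⟩

theorem isBiIdeal_biIdealGen (S : Set (A × B)) : IsBiIdeal (biIdealGen S) := by
  refine ⟨fun p hp I hI => hI.1.1 hp, ?_, ?_, ?_⟩
  · exact fun p hp q h₁ h₂ I hI => hI.1.2.1 p (hp I hI) q h₁ h₂
  · exact fun a b b' h h' I hI => hI.1.2.2.1 a b b' (h I hI) (h' I hI)
  · exact fun a a' b h h' I hI => hI.1.2.2.2 a a' b (h I hI) (h' I hI)

theorem IsBiIdeal.isTwistedSublattice {I : Set (A × B)} (hI : IsBiIdeal I) :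
    IsTwistedSublattice I := by
  intro p hp q hq
  obtain ⟨-, hlow, hsup₂, hsup₁⟩ := hI
  exact ⟨hsup₁ _ _ _ (hlow p hp _ le_rfl inf_le_left) (hlow q hq _ le_rfl inf_le_right),
    hsup₂ _ _ _ (hlow p hp _ inf_le_left le_rfl) (hlow q hq _ inf_le_right le_rfl)⟩

theorem isBiIdeal_tensorBot_union_lowerClosure {T : Set (A × B)} (hT : IsTwistedSublattice T) :
    IsBiIdeal (tensorBot A B ∪ {p | ∃ q ∈ T, p ≤ q}) := by
  refine ⟨Set.subset_union_left, ?_, ?_, ?_⟩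
  · rintro p (hp | ⟨r, hr, hpr⟩) q h₁ h₂
    · refine Or.inl (hp.imp (fun h => ?_) (fun h => ?_))
      · exact le_bot_iff.1 (h ▸ h₁)
      · exact le_bot_iff.1 (h ▸ h₂)
    · exact Or.inr ⟨r, hr, (Prod.mk_le_mk.2 ⟨h₁, h₂⟩).trans hpr⟩
  · rintro a b b' ((ha | hb) | ⟨r, hr, hpr⟩) h'
    · exact Or.inl (Or.inl ha)
    · rwa [show b = ⊥ from hb, bot_sup_eq]
    · rcases h' with (ha | hb') | ⟨r', hr', hpr'⟩
      · exact Or.inl (Or.inl ha)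
      · rw [show b' = ⊥ from hb', sup_bot_eq]; exact Or.inr ⟨r, hr, hpr⟩
      · exact Or.inr ⟨_, (hT r hr r' hr').2,
          Prod.mk_le_mk.2 ⟨le_inf hpr.1 hpr'.1, sup_le_sup hpr.2 hpr'.2⟩⟩
  · rintro a a' b ((ha | hb) | ⟨r, hr, hpr⟩) h'
    · rwa [show a = ⊥ from ha, bot_sup_eq]
    · exact Or.inl (Or.inr hb)
    · rcases h' with (ha' | hb) | ⟨r', hr', hpr'⟩
      · rw [show a' = ⊥ from ha', sup_bot_eq]; exact Or.inr ⟨r, hr, hpr⟩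
      · exact Or.inl (Or.inr hb)
      · exact Or.inr ⟨_, (hT r hr r' hr').1,
          Prod.mk_le_mk.2 ⟨sup_le_sup hpr.1 hpr'.1, le_inf hpr.2 hpr'.2⟩⟩

end BiIdeal

section TensorSpan

variable {A : Type u} {B : Type v} [Lattice A] [OrderBot A] [Lattice B] [OrderBot B]

def tensorSpan (G : Finset (A × B)) : Set (A × B) :=
  biIdealGen (⋃ p ∈ G, pureTensor p.1 p.2)

theorem isBiIdeal_tensorSpan (G : Finset (A × B)) : IsBiIdeal (tensorSpan G) :=
  isBiIdeal_biIdealGen _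

theorem mem_tensorSpan_of_le {G : Finset (A × B)} {p q : A × B} (hp : p ∈ G) (hq : q ≤ p) :
    q ∈ tensorSpan G :=
  subset_biIdealGen _ (Set.mem_biUnion hp (Or.inr hq))

theorem twistedClosure_subset_tensorSpan (G : Finset (A × B)) :
    twistedClosure (G : Set (A × B)) ⊆ tensorSpan G :=
  twistedClosure_min (isBiIdeal_tensorSpan G).isTwistedSublattice
    fun _ hp => mem_tensorSpan_of_le hp le_rfl

theorem exists_le_of_mem_tensorSpan {G : Finset (A × B)} {p : A × B} (hp : p ∈ tensorSpan G) :
    p.1 = ⊥ ∨ p.2 = ⊥ ∨ ∃ q ∈ twistedClosure (G : Set (A × B)), p ≤ q := by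
  refine or_assoc.1 (biIdealGen_subset (isBiIdeal_tensorBot_union_lowerClosure
    (isTwistedSublattice_twistedClosure _)) ?_ hp)
  intro q hq
  obtain ⟨r, hr, hq | hq⟩ := Set.mem_iUnion₂.1 hq
  · exact Or.inl hq
  · exact Or.inr ⟨r, subset_twistedClosure _ hr, hq⟩

end TensorSpan

section Capping

variable {A : Type u} {B : Type v} [Lattice A] [OrderBot A] [Lattice B] [DecidableLE B]

theorem le_sup_filter_of_mem_twistedClosure (hW : WhitmanCondition B) {G : Finset (A × B)}
    {a b : B} (hab : ∀ p ∈ twistedClosure (G : Set (A × B)), a ≤ p.2 ∨ b ≤ p.2 → p.1 = ⊥)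
    {p : A × B} (hp : p ∈ twistedClosure (G : Set (A × B))) (hle : a ⊓ b ≤ p.2) :
    p.1 ≤ (G.filter fun q => a ⊓ b ≤ q.2).sup Prod.fst := by
  set c := (G.filter fun q => a ⊓ b ≤ q.2).sup Prod.fst
  suffices twistedClosure (G : Set (A × B)) ⊆
      {p | p ∈ twistedClosure (G : Set (A × B)) ∧ (a ⊓ b ≤ p.2 → p.1 ≤ c)} from
    (this hp).2 hle
  refine twistedClosure_min ?_ fun q hq => ⟨subset_twistedClosure _ hq,
    fun h => Finset.le_sup (f := Prod.fst) (Finset.mem_filter.2 ⟨hq, h⟩)⟩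
  rintro p ⟨hp, hpc⟩ q ⟨hq, hqc⟩
  obtain ⟨hsup, hinf⟩ := isTwistedSublattice_twistedClosure _ p hp q hq
  refine ⟨⟨hsup, fun h => sup_le (hpc (h.trans inf_le_left)) (hqc (h.trans inf_le_right))⟩,
    ⟨hinf, fun h => ?_⟩⟩
  rcases hW a b p.2 q.2 h with h' | h' | h' | h'
  · exact (le_bot_iff.2 (hab _ hinf (Or.inl h'))).trans bot_le
  · exact (le_bot_iff.2 (hab _ hinf (Or.inr h'))).trans bot_le
  · exact inf_le_of_left_le (hpc h')
  · exact inf_le_of_right_le (hqc h')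

theorem le_sup_filter_of_mem_tensorSpan [OrderBot B] (hW : WhitmanCondition B)
    {G : Finset (A × B)} {a b : B} (hab : ∀ p ∈ tensorSpan G, a ≤ p.2 ∨ b ≤ p.2 → p.1 = ⊥)
    (hne : a ⊓ b ≠ ⊥) {x : A} (hx : (x, a ⊓ b) ∈ tensorSpan G) :
    x ≤ (G.filter fun q => a ⊓ b ≤ q.2).sup Prod.fst := by
  rcases exists_le_of_mem_tensorSpan hx with hx | hx | ⟨q, hq, hxq⟩
  · exact (le_bot_iff.2 hx).trans bot_le
  · exact absurd hx hne
  · exact hxq.1.trans (le_sup_filter_of_mem_twistedClosure hW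
      (fun p hp => hab p (twistedClosure_subset_tensorSpan G hp)) hq hxq.2)

end Capping

def toDualBot {M : Type*} (t : M) : WithBot Mᵒᵈ := WithBot.some (OrderDual.toDual t)

@[simp] theorem toDualBot_ne_bot {M : Type*} (t : M) : toDualBot t ≠ ⊥ := WithBot.coe_ne_bot

section Graph

variable {M : Type v} [Lattice M]

@[simp] theorem toDualBot_le_toDualBot {s t : M} : toDualBot s ≤ toDualBot t ↔ t ≤ s := by
  simp [toDualBot]

theorem toDualBot_sup (s t : M) : toDualBot (s ⊔ t) = toDualBot s ⊓ toDualBot t := by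
  rw [toDualBot, toDual_sup, WithBot.coe_inf]; rfl

theorem toDualBot_inf (s t : M) : toDualBot (s ⊓ t) = toDualBot s ⊔ toDualBot t := by
  rw [toDualBot, toDual_inf, WithBot.coe_sup]; rfl

variable {A : Type u} [Lattice A] [OrderBot A] (f : LatticeHom M A) {S : Set M}
  {Γ : Finset (A × WithBot Mᵒᵈ)}

theorem graph_mem_tensorSpan
    (hΓ : (Γ : Set (A × WithBot Mᵒᵈ)) = (fun t => (f t, toDualBot t)) '' S)
    {t : M} (ht : t ∈ latticeClosure S) : (f t, toDualBot t) ∈ tensorSpan Γ := by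
  refine twistedClosure_subset_tensorSpan Γ ?_
  rw [hΓ, twistedClosure_image f toDualBot toDualBot_sup toDualBot_inf]
  exact ⟨t, ht, rfl⟩

theorem exists_le_graph_of_mem_tensorSpan
    (hΓ : (Γ : Set (A × WithBot Mᵒᵈ)) = (fun t => (f t, toDualBot t)) '' S)
    {p : A × WithBot Mᵒᵈ} (hp : p ∈ tensorSpan Γ) :
    p.1 = ⊥ ∨ p.2 = ⊥ ∨ ∃ t ∈ latticeClosure S, p.1 ≤ f t ∧ p.2 ≤ toDualBot t := by
  rcases exists_le_of_mem_tensorSpan hp with h | h | ⟨q, hq, hpq⟩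
  · exact Or.inl h
  · exact Or.inr (Or.inl h)
  · rw [hΓ, twistedClosure_image f toDualBot toDualBot_sup toDualBot_inf] at hq
    obtain ⟨t, ht, rfl⟩ := hq
    exact Or.inr (Or.inr ⟨t, ht, hpq⟩)

theorem sup_filter_le_of_tensorSpan_subset [DecidableLE (WithBot Mᵒᵈ)]
    (hΓ : (Γ : Set (A × WithBot Mᵒᵈ)) = (fun t => (f t, toDualBot t)) '' S)
    {G : Finset (A × WithBot Mᵒᵈ)} (hG : tensorSpan G ⊆ tensorSpan Γ) (t : M) :
    (G.filter fun q => toDualBot t ≤ q.2).sup Prod.fst ≤ f t := by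
  refine Finset.sup_le fun q hq => ?_
  obtain ⟨hqG, htq⟩ := Finset.mem_filter.1 hq
  rcases exists_le_graph_of_mem_tensorSpan f hΓ (hG (mem_tensorSpan_of_le hqG le_rfl)) with
    h | h | ⟨s, -, hqs, hqs'⟩
  · exact (le_bot_iff.2 h).trans bot_le
  · exact absurd (le_bot_iff.1 (h ▸ htq)) (toDualBot_ne_bot t)
  · exact hqs.trans (OrderHomClass.mono f (toDualBot_le_toDualBot.1 (htq.trans hqs')))

end Graph

namespace FreeLattice

variable {ι : Type*}

theorem of_none_not_le {t : FreeLattice (Option ι)}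
    (ht : t ∈ latticeClosure (Set.range (of ∘ some))) : ¬ of none ≤ t := by
  have ht' : lift Option.isNone t = false :=
    (lift Option.isNone).eq_of_mem_latticeClosure (by rintro _ ⟨k, rfl⟩; rfl) ht
  intro hle
  simpa [ht', Bool.le_iff_imp] using OrderHomClass.mono (lift Option.isNone) hle

theorem not_le_of_none {t : FreeLattice (Option ι)}
    (ht : t ∈ latticeClosure (Set.range (of ∘ some))) : ¬ t ≤ of none := by
  have ht' : lift Option.isSome t = true :=
    (lift Option.isSome).eq_of_mem_latticeClosure (by rintro _ ⟨k, rfl⟩; rfl) ht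
  intro hle
  simpa [ht', Bool.le_iff_imp] using OrderHomClass.mono (lift Option.isSome) hle

end FreeLattice

section Witness

open FreeLattice

variable {A : Type u} [Lattice A] [OrderBot A] {ι : Type v}

theorem fst_eq_bot_of_mem_tensorSpan_inter (f : LatticeHom (FreeLattice (Option ι)) A)
    {Γ : Finset (A × WithBot (FreeLattice (Option ι))ᵒᵈ)}
    (hΓ : (Γ : Set (A × WithBot (FreeLattice (Option ι))ᵒᵈ)) =
      (fun t => (f t, toDualBot t)) '' Set.range (of ∘ some))
    (e : A) {t : FreeLattice (Option ι)} (ht : t ∈ latticeClosure (Set.range (of ∘ some)))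
    {p : A × WithBot (FreeLattice (Option ι))ᵒᵈ}
    (hp : p ∈ tensorSpan Γ ∩ tensorSpan {(e, toDualBot (of none))})
    (h : toDualBot t ≤ p.2 ∨ toDualBot (of none) ≤ p.2) : p.1 = ⊥ := by
  rcases h with h | h
  · rcases exists_le_of_mem_tensorSpan hp.2 with h₁ | h₂ | ⟨q, hq, hpq⟩
    · exact h₁
    · exact absurd (le_bot_iff.1 (h₂ ▸ h)) (toDualBot_ne_bot t)
    · rw [Finset.coe_singleton, twistedClosure_singleton, Set.mem_singleton_iff] at hq
      subst hq
      exact absurd (toDualBot_le_toDualBot.1 (h.trans hpq.2)) (of_none_not_le ht)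
  · rcases exists_le_graph_of_mem_tensorSpan f hΓ hp.1 with h₁ | h₂ | ⟨s, hs, -, hps⟩
    · exact h₁
    · exact absurd (le_bot_iff.1 (h₂ ▸ h)) (toDualBot_ne_bot _)
    · exact absurd (toDualBot_le_toDualBot.1 (h.trans hps)) (not_le_of_none hs)

theorem latticeClosure_range_finite_of_tensorIsLattice [Fintype ι] (g : ι → A)
    (hweak : TensorIsLattice A (WithBot (FreeLattice (Option ι))ᵒᵈ)) :
    (latticeClosure (Set.range g)).Finite := by
  classical
  set f := lift (Option.elim' ⊥ g)
  set S := Set.range (of ∘ some : ι → FreeLattice (Option ι))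
  set u := of (none : Option ι)
  set Γ := Finset.univ.image fun k => (g k, toDualBot (of (some k)))
  have hΓ : (Γ : Set (A × WithBot (FreeLattice (Option ι))ᵒᵈ)) =
      (fun t => (f t, toDualBot t)) '' S := by
    simp [Γ, S, f, ← Set.range_comp, Function.comp_def]
  have hrange : latticeClosure (Set.range g) = f '' latticeClosure S := by
    rw [image_latticeClosure _ _ (map_sup f) (map_inf f), ← Set.range_comp]; rfl
  set e := Finset.univ.sup g
  have he : latticeClosure (Set.range g) ⊆ Set.Iic e :=
    latticeClosure_min (by rintro _ ⟨k, rfl⟩; exact Finset.le_sup (Finset.mem_univ k))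
      ⟨fun a ha b hb => sup_le ha hb, fun a ha b _ => inf_le_of_left_le ha⟩
  obtain ⟨G, hG⟩ := hweak (tensorSpan Γ) (tensorSpan {(e, toDualBot u)}) ⟨Γ, rfl⟩ ⟨_, rfl⟩
  change _ = tensorSpan G at hG
  have hjoin : ∀ t ∈ latticeClosure S,
      f t = (G.filter fun q => toDualBot (t ⊔ u) ≤ q.2).sup Prod.fst := by
    intro t ht
    refine le_antisymm ?_ ?_
    · rw [toDualBot_sup]
      refine le_sup_filter_of_mem_tensorSpan whitmanCondition.dual.withBot
        (fun p hp => fst_eq_bot_of_mem_tensorSpan_inter f hΓ e ht (hG ▸ hp)) ?_ ?_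
      · rw [← toDualBot_sup]; exact toDualBot_ne_bot _
      · rw [← hG]
        exact ⟨(isBiIdeal_tensorSpan Γ).2.1 _ (graph_mem_tensorSpan f hΓ ht) _ le_rfl inf_le_left,
          mem_tensorSpan_of_le (Finset.mem_singleton_self _)
            ⟨he (hrange ▸ ⟨t, ht, rfl⟩), inf_le_right⟩⟩
    · simpa [f, u] using sup_filter_le_of_tensorSpan_subset f hΓ
        (hG ▸ Set.inter_subset_left) (t ⊔ u)
  refine (G.powerset.image fun G' => G'.sup Prod.fst).finite_toSet.subset ?_
  rw [hrange]
  rintro _ ⟨t, ht, rfl⟩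
  exact Finset.mem_image.2 ⟨_, Finset.mem_powerset.2 (Finset.filter_subset _ _), (hjoin t ht).symm⟩

end Witness

/-- a weakly amenable lattice with zero is locally finite. -/
theorem weakly_amenable_implies_locally_finite (A : Type u) [Lattice A] [OrderBot A]
    (hweak : ∀ (L : Type v) [Lattice L] [OrderBot L], TensorIsLattice A L) :
    IsLocallyFiniteLattice A := by
  intro s
  have hs : Set.range (Subtype.val ∘ (Equiv.ulift.{v}.trans s.equivFin.symm)) = s := by
    rw [EquivLike.range_comp, Subtype.range_coe_subtype]; rfl
  rw [← hs]
  exact latticeClosure_range_finite_of_tensorIsLattice _ (hweak _)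
end

section
/- Let A and B be lattices each having a least element 0, let n be a positive integer, and let a_0, …, a_{n-1} ∈ A and b_0, …, b_{n-1} ∈ B. Then the join ⋁_{i<n} a_i ⊗ b_i in the lattice of bi-ideals of A×B (i.e., the smallest bi-ideal containing each pure tensor a_i ⊗ b_i) equals the union, over all lattice terms P in n variables, of the pure tensors P(a_0,…,a_{n-1}) ⊗ P^d(b_0,…,b_{n-1}), where P^d denotes the dual term of P. -/
/-! Tensor products of lattices with zero: bi-ideals, pure tensors,
compact bi-ideals, capped bi-ideals. -/

universe u v

/-- Lattice terms in `n` variables. -/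
inductive LatTerm (n : ℕ) : Type
  | var : Fin n → LatTerm n
  | meet : LatTerm n → LatTerm n → LatTerm n
  | join : LatTerm n → LatTerm n → LatTerm n

namespace LatTerm

/-- Evaluation of a lattice term in a lattice. -/
def eval {n : ℕ} {M : Type u} [Lattice M] (v : Fin n → M) : LatTerm n → M
  | var i => v i
  | meet s t => eval v s ⊓ eval v t
  | join s t => eval v s ⊔ eval v t

/-- The dual of a lattice term: interchange `∧` and `∨` throughout. -/
def dual {n : ℕ} : LatTerm n → LatTerm n
  | var i => var i
  | meet s t => join (dual s) (dual t)
  | join s t => meet (dual s) (dual t)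

end LatTerm

/-! The generated bi-ideal is already the union of the pure tensors `P(a⃗) ⊗ P^d(b⃗)`:
this union contains the generators `aᵢ ⊗ bᵢ` (take `P = xᵢ`), and it is a bi-ideal because
a lateral join of `(x, y) ∈ P(a⃗) ⊗ P^d(b⃗)` and `(x, y') ∈ Q(a⃗) ⊗ Q^d(b⃗)` lies in
`(P ∧ Q)(a⃗) ⊗ (P ∧ Q)^d(b⃗)` when `x, y, y' ≠ 0` (and trivially in one of the two given
tensors otherwise), and dually for `P ∨ Q`. Conversely every bi-ideal containing
the generators contains `(P(a⃗), P^d(b⃗))`, by induction on `P`. -/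

section PureTensor

variable {A : Type u} {B : Type v} [Lattice A] [OrderBot A] [Lattice B] [OrderBot B]

theorem mk_mem_pureTensor (a : A) (b : B) : (a, b) ∈ pureTensor a b :=
  Or.inr ⟨le_rfl, le_rfl⟩

theorem swap_mem_pureTensor {p : A × B} {a : B} {b : A} :
    p.swap ∈ pureTensor a b ↔ p ∈ pureTensor b a := by
  simp only [pureTensor, tensorBot, Set.mem_union, Set.mem_ofPred_eq, Prod.fst_swap,
    Prod.snd_swap, or_comm, and_comm]

theorem isLowerSet_pureTensor (a : A) (b : B) : IsLowerSet (pureTensor a b) := by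
  rintro p q ⟨h₁, h₂⟩ ((hp | hp) | ⟨ha, hb⟩)
  · exact Or.inl (Or.inl (le_bot_iff.1 (hp ▸ h₁)))
  · exact Or.inl (Or.inr (le_bot_iff.1 (hp ▸ h₂)))
  · exact Or.inr ⟨h₁.trans ha, h₂.trans hb⟩

theorem IsBiIdeal.pureTensor_subset {I : Set (A × B)} (hI : IsBiIdeal I) {a : A} {b : B}
    (h : (a, b) ∈ I) : pureTensor a b ⊆ I := by
  rintro p (hp | ⟨ha, hb⟩)
  · exact hI.1 hp
  · exact hI.2.1 _ h p ha hb

variable {ι : Type*} {f : ι → A} {g : ι → B}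

theorem swap_mem_iUnion_pureTensor {p : B × A} :
    p.swap ∈ ⋃ i, pureTensor (f i) (g i) ↔ p ∈ ⋃ i, pureTensor (g i) (f i) := by
  simp only [Set.mem_iUnion, swap_mem_pureTensor]

theorem mk_sup_mem_iUnion_pureTensor (hmeet : ∀ i j, ∃ k, f i ⊓ f j ≤ f k ∧ g i ⊔ g j ≤ g k)
    {x : A} {y y' : B} (h : (x, y) ∈ ⋃ i, pureTensor (f i) (g i))
    (h' : (x, y') ∈ ⋃ i, pureTensor (f i) (g i)) :
    (x, y ⊔ y') ∈ ⋃ i, pureTensor (f i) (g i) := by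
  obtain ⟨i, (hx | hy) | ⟨hxi, hyi⟩⟩ := Set.mem_iUnion.1 h
  · exact Set.mem_iUnion.2 ⟨i, Or.inl (Or.inl hx)⟩
  · simpa only [show y = ⊥ from hy, bot_sup_eq] using h'
  obtain ⟨j, (hx | hy') | ⟨hxj, hy'j⟩⟩ := Set.mem_iUnion.1 h'
  · exact Set.mem_iUnion.2 ⟨j, Or.inl (Or.inl hx)⟩
  · simpa only [show y' = ⊥ from hy', sup_bot_eq] using h
  obtain ⟨k, hfk, hgk⟩ := hmeet i j
  exact Set.mem_iUnion.2 ⟨k, Or.inr ⟨(le_inf hxi hxj).trans hfk, (sup_le_sup hyi hy'j).trans hgk⟩⟩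

theorem isBiIdeal_iUnion_pureTensor [Nonempty ι]
    (hmeet : ∀ i j, ∃ k, f i ⊓ f j ≤ f k ∧ g i ⊔ g j ≤ g k)
    (hjoin : ∀ i j, ∃ k, f i ⊔ f j ≤ f k ∧ g i ⊓ g j ≤ g k) :
    IsBiIdeal (⋃ i, pureTensor (f i) (g i)) := by
  refine ⟨fun p hp => Set.mem_iUnion.2 ⟨Classical.arbitrary ι, Or.inl hp⟩,
    fun p hp q h₁ h₂ => isLowerSet_iUnion (fun i => isLowerSet_pureTensor _ _) ⟨h₁, h₂⟩ hp,
    fun x y y' => mk_sup_mem_iUnion_pureTensor hmeet, fun x x' y h h' => ?_⟩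
  have hjoin' : ∀ i j, ∃ k, g i ⊓ g j ≤ g k ∧ f i ⊔ f j ≤ f k :=
    fun i j => (hjoin i j).imp fun _ => And.symm
  rw [← swap_mem_iUnion_pureTensor] at h h'
  exact swap_mem_iUnion_pureTensor.1 (mk_sup_mem_iUnion_pureTensor hjoin' h h')

end PureTensor

theorem LatTerm.mk_eval_dual_mem {A : Type u} {B : Type v} [Lattice A] [OrderBot A]
    [Lattice B] [OrderBot B] {I : Set (A × B)} (hI : IsBiIdeal I) {n : ℕ} {a : Fin n → A}
    {b : Fin n → B} (h : ∀ i, (a i, b i) ∈ I) (P : LatTerm n) :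
    (P.eval a, P.dual.eval b) ∈ I := by
  obtain ⟨-, hdown, hsup₂, hsup₁⟩ := hI
  induction P with
  | var i => exact h i
  | meet s t ihs iht =>
    exact hsup₂ _ _ _ (hdown _ ihs _ inf_le_left le_rfl) (hdown _ iht _ inf_le_right le_rfl)
  | join s t ihs iht =>
    exact hsup₁ _ _ _ (hdown _ ihs _ le_rfl inf_le_left) (hdown _ iht _ le_rfl inf_le_right)

/-- Lemma 2.2(iii) of Grätzer–Wehrung: for lattices `A`, `B`
with zero, the join `⋁_{i<n} a_i ⊗ b_i` in the lattice of bi-ideals of `A × B`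
equals the union over all lattice terms `P` in `n` variables of the pure tensors
`P(a⃗) ⊗ P^d(b⃗)`. -/
theorem biIdealGen_pureTensors_eq_iUnion_terms {A : Type u} {B : Type v}
    [Lattice A] [OrderBot A] [Lattice B] [OrderBot B]
    {n : ℕ} (hn : 0 < n) (a : Fin n → A) (b : Fin n → B) :
    biIdealGen (⋃ i : Fin n, pureTensor (a i) (b i)) =
      ⋃ P : LatTerm n, pureTensor (P.eval a) (P.dual.eval b) := by
  have : Nonempty (LatTerm n) := ⟨.var ⟨0, hn⟩⟩
  have hTerms : IsBiIdeal (⋃ P : LatTerm n, pureTensor (P.eval a) (P.dual.eval b)) :=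
    isBiIdeal_iUnion_pureTensor (fun P Q => ⟨.meet P Q, le_rfl, le_rfl⟩)
      (fun P Q => ⟨.join P Q, le_rfl, le_rfl⟩)
  apply subset_antisymm
  · exact Set.sInter_subset_of_mem ⟨hTerms, Set.iUnion_mono' fun i => ⟨.var i, subset_rfl⟩⟩
  · refine Set.iUnion_subset fun P => Set.subset_sInter fun I ⟨hI, hgen⟩ => ?_
    have hvar : ∀ i, (a i, b i) ∈ I :=
      fun i => hgen (Set.mem_iUnion.2 ⟨i, mk_mem_pureTensor _ _⟩)
    exact hI.pureTensor_subset (LatTerm.mk_eval_dual_mem hI hvar P)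
end
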